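/- arXiv:2602.13460 — 3 statements merged into one kernel-verified Lean document; each statement's English description precedes it below -/
import Mathlib

section
/- Let n ≥ 2, Δ ≥ 2 be reals with μ = log n, and let V₁ be a sum of at most Δ independent Bernoulli random variables each with success probability 1/C where C = Δ/log n (so E[V₁] ≤ log n). Then Pr[V₁ ≥ log n + (log Δ + sqrt((log Δ)² + 8·(log Δ)(log n)))/2] ≤ 1/Δ. -/
/-!
Chernoff's method with `s = log (1 + η)`: the moment generating function of a `{0,1}`-valued
variable with success probability at most `p` is `1 + p (eˢ - 1) ≤ exp (p (eˢ - 1))`, so by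
independence the sum has `P[(1 + η) μ ≤ ∑ Xᵢ] ≤ exp (-η² μ / (2 + η))` whenever `m p ≤ μ`, using
`log (1 + η) ≥ 2η / (2 + η)`. Here `μ = log n` and the threshold is `(1 + η) μ` for the positive
root `η` of `μ η² = (log Δ) (2 + η)`, which makes the bound `exp (-log Δ) = 1 / Δ`.
-/

open Real MeasureTheory ProbabilityTheory Finset

lemma exp_mul_eq_one_add_indicator_of_zero_one {Ω : Type*} {X : Ω → ℝ}
    (hval : ∀ ω, X ω = 0 ∨ X ω = 1) (s : ℝ) :
    (fun ω => exp (s * X ω)) = fun ω => 1 + {ω | X ω = 1}.indicator (fun _ => exp s - 1) ω := by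
  funext ω
  rcases hval ω with h | h <;> simp [h]

section ZeroOne

variable {Ω : Type*} [MeasurableSpace Ω] {P : Measure Ω}

lemma mgf_eq_of_zero_one [IsProbabilityMeasure P] {X : Ω → ℝ} (hX : Measurable X)
    (hval : ∀ ω, X ω = 0 ∨ X ω = 1) (s : ℝ) :
    mgf X P s = 1 + P.real {ω | X ω = 1} * (exp s - 1) := by
  have hA : MeasurableSet {ω | X ω = 1} := hX (measurableSet_singleton 1)
  rw [mgf, exp_mul_eq_one_add_indicator_of_zero_one hval,
    integral_add (integrable_const 1) ((integrable_const _).indicator hA),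
    integral_indicator_const _ hA]
  simp [mul_comm]

lemma mgf_le_exp_of_zero_one [IsProbabilityMeasure P] {X : Ω → ℝ} (hX : Measurable X)
    (hval : ∀ ω, X ω = 0 ∨ X ω = 1) {p s : ℝ} (hp : P.real {ω | X ω = 1} ≤ p) (hs : 0 ≤ s) :
    mgf X P s ≤ exp (p * (exp s - 1)) := by
  have hs' : 0 ≤ exp s - 1 := by linarith [one_le_exp hs]
  calc mgf X P s = 1 + P.real {ω | X ω = 1} * (exp s - 1) := mgf_eq_of_zero_one hX hval s
    _ ≤ p * (exp s - 1) + 1 := by nlinarith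
    _ ≤ exp (p * (exp s - 1)) := add_one_le_exp _

variable [IsProbabilityMeasure P] {ι : Type*} [Fintype ι] {X : ι → Ω → ℝ}

lemma measureReal_sum_ge_le_exp_of_zero_one (hmeas : ∀ i, Measurable (X i))
    (hindep : iIndepFun X P) (hval : ∀ i ω, X i ω = 0 ∨ X i ω = 1) {p : ℝ}
    (hp : ∀ i, P.real {ω | X i ω = 1} ≤ p) {s : ℝ} (hs : 0 ≤ s) (t : ℝ) :
    P.real {ω | t ≤ ∑ i, X i ω} ≤ exp (Fintype.card ι * p * (exp s - 1) - s * t) := by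
  have hint : Integrable (fun ω => exp (s * (∑ i, X i) ω)) P := by
    refine hindep.integrable_exp_mul_sum hmeas fun i _ => ?_
    rw [exp_mul_eq_one_add_indicator_of_zero_one (hval i)]
    exact (integrable_const 1).add
      ((integrable_const _).indicator ((hmeas i) (measurableSet_singleton 1)))
  have hmgf : mgf (∑ i, X i) P s ≤ exp (Fintype.card ι * p * (exp s - 1)) := by
    rw [hindep.mgf_sum hmeas, ← Finset.card_univ, mul_assoc, ← nsmul_eq_mul, ← Finset.sum_const,
      exp_sum]
    exact Finset.prod_le_prod (fun i _ => mgf_nonneg)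
      fun i _ => mgf_le_exp_of_zero_one (hmeas i) (hval i) (hp i) hs
  calc P.real {ω | t ≤ ∑ i, X i ω} = P.real {ω | t ≤ (∑ i, X i) ω} := by simp [Finset.sum_apply]
    _ ≤ exp (-s * t) * mgf (∑ i, X i) P s := measure_ge_le_exp_mul_mgf t hs hint
    _ ≤ exp (-s * t) * exp (Fintype.card ι * p * (exp s - 1)) := by gcongr
    _ = exp (Fintype.card ι * p * (exp s - 1) - s * t) := by rw [← exp_add]; ring_nf

theorem measureReal_sum_ge_one_add_mul_le_exp_of_zero_one (hmeas : ∀ i, Measurable (X i))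
    (hindep : iIndepFun X P) (hval : ∀ i ω, X i ω = 0 ∨ X i ω = 1) {p μ η : ℝ}
    (hp : ∀ i, P.real {ω | X i ω = 1} ≤ p) (hpμ : Fintype.card ι * p ≤ μ) (hμ : 0 ≤ μ)
    (hη : 0 ≤ η) :
    P.real {ω | (1 + η) * μ ≤ ∑ i, X i ω} ≤ exp (-(η ^ 2 * μ / (2 + η))) := by
  have hexp : exp (log (1 + η)) = 1 + η := exp_log (by linarith)
  refine (measureReal_sum_ge_le_exp_of_zero_one hmeas hindep hval hp
    (log_nonneg (by linarith)) ((1 + η) * μ)).trans (exp_le_exp.mpr ?_)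
  simp only [hexp, add_sub_cancel_left]
  have hlog : 2 * η / (η + 2) ≤ log (1 + η) := le_log_one_add_of_nonneg hη
  have hmean : Fintype.card ι * p * η ≤ μ * η := by gcongr
  have : 2 * η / (η + 2) * ((1 + η) * μ) ≤ log (1 + η) * ((1 + η) * μ) := by gcongr
  have hexponent : μ * η - 2 * η / (η + 2) * ((1 + η) * μ) = -(η ^ 2 * μ / (2 + η)) := by
    field_simp; ring
  linarith

end ZeroOne

lemma sq_mul_div_two_add_eq_of_quadratic_root {μ L : ℝ} (hμ : 0 < μ) (hL : 0 ≤ L) :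
    ((L + √(L ^ 2 + 8 * L * μ)) / (2 * μ)) ^ 2 * μ / (2 + (L + √(L ^ 2 + 8 * L * μ)) / (2 * μ))
      = L := by
  have hR : √(L ^ 2 + 8 * L * μ) ^ 2 = L ^ 2 + 8 * L * μ := sq_sqrt (by positivity)
  have hpos : 0 < 2 + (L + √(L ^ 2 + 8 * L * μ)) / (2 * μ) := by positivity
  rw [div_eq_iff hpos.ne']
  generalize √(L ^ 2 + 8 * L * μ) = R at hR
  field_simp
  linear_combination hR

/-- Chernoff instantiation: `V₁` is a sum of at most `Δ` independent Bernoulli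
random variables with success probability `1/C` where `C = Δ/log n`
(so `E[V₁] ≤ log n`); then
`Pr[V₁ ≥ log n + (log Δ + √((log Δ)² + 8 (log Δ)(log n)))/2] ≤ 1/Δ`. -/
theorem bernoulli_chernoff_instantiation
    {Ω : Type*} [MeasurableSpace Ω] (P : Measure Ω) [IsProbabilityMeasure P]
    (n Δ : ℝ) (hn : 2 ≤ n) (hΔ : 2 ≤ Δ)
    (m : ℕ) (hm : (m : ℝ) ≤ Δ)
    (X : Fin m → Ω → ℝ)
    (hmeas : ∀ i, Measurable (X i))
    (hindep : iIndepFun X P)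
    (hval : ∀ i, ∀ ω, X i ω = 0 ∨ X i ω = 1)
    (hp : ∀ i, P {ω | X i ω = 1} = ENNReal.ofReal (1 / (Δ / Real.log n))) :
    (P {ω | Real.log n +
        (Real.log Δ + Real.sqrt ((Real.log Δ) ^ 2 + 8 * Real.log Δ * Real.log n)) / 2 ≤
        ∑ i, X i ω}).toReal ≤ 1 / Δ := by
  have hμ : 0 < Real.log n := log_pos (by linarith)
  have hL : 0 ≤ Real.log Δ := log_nonneg (by linarith)
  set μ := Real.log n
  set L := Real.log Δ
  set η := (L + √(L ^ 2 + 8 * L * μ)) / (2 * μ) with hη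
  have hthreshold : μ + (L + √(L ^ 2 + 8 * L * μ)) / 2 = (1 + η) * μ := by
    rw [hη]; field_simp
  have hp' : ∀ i, P.real {ω | X i ω = 1} ≤ 1 / (Δ / μ) := fun i => by
    rw [measureReal_def, hp i, ENNReal.toReal_ofReal (by positivity)]
  have hmean : (Fintype.card (Fin m) : ℝ) * (1 / (Δ / μ)) ≤ μ := by
    rw [Fintype.card_fin, one_div_div, mul_div_assoc', div_le_iff₀ (by linarith), mul_comm μ]
    exact mul_le_mul_of_nonneg_right hm hμ.le
  have hbound := measureReal_sum_ge_one_add_mul_le_exp_of_zero_one hmeas hindep hval hp' hmean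
    hμ.le (by positivity : 0 ≤ η)
  rwa [sq_mul_div_two_add_eq_of_quadratic_root hμ hL, exp_neg, exp_log (by linarith),
    inv_eq_one_div, ← hthreshold] at hbound
end

section
/- Let H be a nonempty finite set and s : H → ℝ a score function with sensitivity GS (a positive real). Consider the exponential mechanism that outputs h ∈ H with probability proportional to exp(ε·s(h)/(2·GS)). Let OPT = max_{h∈H} s(h) and H* = {h ∈ H : s(h) = OPT}. Then for any t ≥ 0, Pr[s(output) ≤ OPT - (2·GS/ε)·(log(|H|/|H*|) + t)] ≤ exp(-t). -/
open Real Finset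
open scoped Classical

/-! Every candidate scoring at most `B` has weight at most `w(B)`, so the low-score set carries
mass at most `|H| w(B)`, while the maximisers alone contribute `|H*| w(OPT)` to the normaliser.
For `w(x) = exp(εx/(2GS))` and `B = OPT - (2GS/ε)(log(|H|/|H*|) + t)` the resulting bound
`(|H|/|H*|) · w(B)/w(OPT)` is exactly `e^{-t}`. -/

section MonotoneWeight

variable {ι : Type*} [Fintype ι] (s : ι → ℝ) {w : ℝ → ℝ}

theorem sum_filter_le_le_card_mul (hw : ∀ x, 0 ≤ w x) (hw_mono : Monotone w) (B : ℝ) :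
    ∑ h ∈ univ.filter (fun h => s h ≤ B), w (s h) ≤ Fintype.card ι * w B :=
  calc ∑ h ∈ univ.filter (fun h => s h ≤ B), w (s h)
      ≤ ∑ _h ∈ univ.filter (fun h => s h ≤ B), w B :=
        sum_le_sum fun h hh => hw_mono (mem_filter.1 hh).2
    _ = #(univ.filter fun h => s h ≤ B) * w B := by rw [sum_const, nsmul_eq_mul]
    _ ≤ Fintype.card ι * w B := by
        gcongr
        · exact hw B
        · exact card_filter_le _ _

variable [Nonempty ι]

theorem card_filter_eq_sup'_pos :
    0 < #(univ.filter fun h => s h = univ.sup' univ_nonempty s) := by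
  obtain ⟨h, -, hs⟩ := exists_mem_eq_sup' univ_nonempty s
  exact card_pos.2 ⟨h, mem_filter.2 ⟨mem_univ h, hs.symm⟩⟩

theorem card_filter_eq_sup'_mul_le_sum (hw : ∀ x, 0 ≤ w x) :
    #(univ.filter fun h => s h = univ.sup' univ_nonempty s) * w (univ.sup' univ_nonempty s)
      ≤ ∑ h, w (s h) := by
  rw [← nsmul_eq_mul, ← sum_const]
  calc ∑ _h ∈ univ.filter (fun h => s h = univ.sup' univ_nonempty s),
          w (univ.sup' univ_nonempty s)
      = ∑ h ∈ univ.filter (fun h => s h = univ.sup' univ_nonempty s), w (s h) :=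
        sum_congr rfl fun h hh => by rw [(mem_filter.1 hh).2]
    _ ≤ ∑ h, w (s h) := sum_le_sum_of_subset_of_nonneg (filter_subset _ _) fun _ _ _ => hw _

theorem sum_filter_le_div_sum_le (hw : ∀ x, 0 < w x) (hw_mono : Monotone w) (B : ℝ) :
    (∑ h ∈ univ.filter (fun h => s h ≤ B), w (s h)) / ∑ h, w (s h)
      ≤ Fintype.card ι / #(univ.filter fun h => s h = univ.sup' univ_nonempty s) *
          (w B / w (univ.sup' univ_nonempty s)) := by
  have hK : (0 : ℝ) < #(univ.filter fun h => s h = univ.sup' univ_nonempty s) := by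
    exact_mod_cast card_filter_eq_sup'_pos s
  have hZ := card_filter_eq_sup'_mul_le_sum s fun x => (hw x).le
  have hOPT := hw (univ.sup' univ_nonempty s)
  rw [div_mul_div_comm, div_le_div_iff₀ (hZ.trans_lt' (by positivity)) (by positivity)]
  calc (∑ h ∈ univ.filter (fun h => s h ≤ B), w (s h)) *
        (#(univ.filter fun h => s h = univ.sup' univ_nonempty s) * w (univ.sup' univ_nonempty s))
      ≤ (Fintype.card ι * w B) * ∑ h, w (s h) :=
        mul_le_mul (sum_filter_le_le_card_mul s (fun x => (hw x).le) hw_mono B) hZ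
          (by positivity) (mul_nonneg (by positivity) (hw B).le)
    _ = _ := by ring

end MonotoneWeight

theorem exp_mechanism_utility_general
    {H : Type*} [Fintype H] [Nonempty H]
    (s : H → ℝ) (GS ε t : ℝ) (hGS : 0 < GS) (hε : 0 < ε) :
    (∑ h ∈ Finset.univ.filter (fun h => s h ≤
        (Finset.univ.sup' Finset.univ_nonempty s) -
          (2 * GS / ε) * (Real.log ((Fintype.card H : ℝ) /
            ((Finset.univ.filter (fun h => s h =
              Finset.univ.sup' Finset.univ_nonempty s)).card : ℝ)) + t)),
        Real.exp (ε * s h / (2 * GS))) /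
      (∑ h, Real.exp (ε * s h / (2 * GS))) ≤ Real.exp (-t) := by
  set OPT := univ.sup' univ_nonempty s
  set ratio : ℝ := Fintype.card H / #(univ.filter fun h => s h = OPT)
  have hratio : 0 < ratio := div_pos (by exact_mod_cast Fintype.card_pos)
    (by exact_mod_cast card_filter_eq_sup'_pos s)
  have hw_mono : Monotone fun x => exp (ε * x / (2 * GS)) := fun x y hxy => by
    dsimp only; gcongr
  refine (sum_filter_le_div_sum_le s (w := fun x => exp (ε * x / (2 * GS)))
    (fun _ => exp_pos _) hw_mono _).trans_eq ?_
  have hexponent : ε * (OPT - 2 * GS / ε * (log ratio + t)) / (2 * GS) - ε * OPT / (2 * GS)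
      = -log ratio + -t := by
    field_simp
    ring
  rw [← exp_sub, hexponent, exp_add, exp_neg, exp_log hratio, ← mul_assoc,
    mul_inv_cancel₀ hratio.ne', one_mul]

/-- Utility guarantee of the exponential mechanism: over a finite nonempty
candidate set `H` with scores `s`, sensitivity `GS`, outputting `h` with
probability proportional to `exp(ε s(h)/(2 GS))`, the probability that the
output scores at most `OPT - (2GS/ε)(log(|H|/|H*|) + t)` is at most `e^{-t}`. -/
theorem exp_mechanism_utility
    {H : Type*} [Fintype H] [Nonempty H]
    (s : H → ℝ) (GS ε t : ℝ) (hGS : 0 < GS) (hε : 0 < ε) (ht : 0 ≤ t) :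
    (∑ h ∈ Finset.univ.filter (fun h => s h ≤
        (Finset.univ.sup' Finset.univ_nonempty s) -
          (2 * GS / ε) * (Real.log ((Fintype.card H : ℝ) /
            ((Finset.univ.filter (fun h => s h =
              Finset.univ.sup' Finset.univ_nonempty s)).card : ℝ)) + t)),
        Real.exp (ε * s h / (2 * GS))) /
      (∑ h, Real.exp (ε * s h / (2 * GS))) ≤ Real.exp (-t) :=
  exp_mechanism_utility_general s GS ε t hGS hε
end

section
/- Let a vertex be recolored by the exponential mechanism over a palette of size C = Δ/log n using score s(c) = -(number of neighbors colored c), which has sensitivity 1, where the vertex has degree at most Δ. The optimal score satisfies OPT ≥ -log n (some color is used by at most Δ/C = log n neighbors). Then with probability at least 1 - 1/n², the chosen color c satisfies (number of neighbors colored c) ≤ (1 + 4/ε)·log n + (2/ε)·log Δ. -/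
open Real Finset
open scoped Classical

/-!
Pigeonhole gives a color `i₀` used by at most `Δ / C = log n` neighbours, so the normalising sum of
the exponential mechanism is at least `exp (-ε log n / 2)`. Every color above the threshold `T` has
weight at most `exp (-ε T / 2)`, and there are at most `Δ` of them since each is used at least once.
The threshold is chosen so that `ε (T - log n) / 2 = 2 log n + log Δ`, and the ratio is at most
`Δ / (n² Δ)`.
-/

theorem sum_exp_filter_div_sum_exp_le {ι : Type*} [Fintype ι] (c : ι → ℝ) {ε : ℝ} (hε : 0 ≤ ε)
    (T : ℝ) (i₀ : ι) :
    (∑ i ∈ univ.filter (fun i => T < c i), exp (-(ε * c i) / 2)) / ∑ i, exp (-(ε * c i) / 2) ≤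
      #(univ.filter fun i => T < c i) * exp (-(ε * (T - c i₀)) / 2) := by
  set S := univ.filter fun i => T < c i
  have hnum : ∑ i ∈ S, exp (-(ε * c i) / 2) ≤ #S * exp (-(ε * T) / 2) := by
    rw [← nsmul_eq_mul]
    refine sum_le_card_nsmul _ _ _ fun i hi => exp_le_exp.mpr ?_
    have hTc : T < c i := (mem_filter.mp hi).2
    nlinarith
  have hden : exp (-(ε * c i₀) / 2) ≤ ∑ i, exp (-(ε * c i) / 2) :=
    single_le_sum (f := fun i => exp (-(ε * c i) / 2)) (fun i _ => (exp_pos _).le) (mem_univ i₀)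
  calc (∑ i ∈ S, exp (-(ε * c i) / 2)) / ∑ i, exp (-(ε * c i) / 2)
      ≤ #S * exp (-(ε * T) / 2) / exp (-(ε * c i₀) / 2) :=
        div_le_div₀ (by positivity) hnum (exp_pos _) hden
    _ = #S * exp (-(ε * (T - c i₀)) / 2) := by
        rw [mul_div_assoc, ← exp_sub]
        ring_nf

theorem card_filter_lt_le_sum {ι : Type*} [Fintype ι] (f : ι → ℕ) {T : ℝ} (hT : 0 ≤ T) :
    (#(univ.filter fun i => T < (f i : ℝ)) : ℝ) ≤ ∑ i, (f i : ℝ) := by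
  set S := univ.filter fun i => T < (f i : ℝ)
  calc (#S : ℝ) = #S • (1 : ℝ) := by rw [nsmul_one]
    _ ≤ ∑ i ∈ S, (f i : ℝ) := card_nsmul_le_sum _ _ _ fun i hi => by
        have hpos : 0 < f i := by exact_mod_cast hT.trans_lt (mem_filter.mp hi).2
        exact_mod_cast hpos
    _ ≤ ∑ i, (f i : ℝ) := sum_le_sum_of_subset_of_nonneg (subset_univ _) fun i _ _ => by positivity

/-- Recoloring a vertex by the exponential mechanism over a palette of
`C = Δ/log n` colors with score `-(number of neighbors colored c)`
(sensitivity 1): with probability at least `1 - 1/n²` the chosen color `c`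
satisfies `count(c) ≤ (1 + 4/ε) log n + (2/ε) log Δ`. -/
theorem recolor_utility
    (n Δ ε : ℝ) (hn : 2 ≤ n) (hΔ : 2 ≤ Δ) (hε : 0 < ε)
    (C : ℕ) (hC1 : 1 ≤ C) (hC : (C : ℝ) = Δ / Real.log n)
    (f : Fin C → ℕ) (hsum : (∑ i, (f i : ℝ)) ≤ Δ) :
    (∑ i ∈ Finset.univ.filter
        (fun i => (1 + 4 / ε) * Real.log n + (2 / ε) * Real.log Δ < (f i : ℝ)),
        Real.exp (-(ε * (f i : ℝ)) / 2)) /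
      (∑ i, Real.exp (-(ε * (f i : ℝ)) / 2)) ≤ 1 / n ^ 2 := by
  have hL : 0 < log n := log_pos (by linarith)
  have hD : 0 < log Δ := log_pos (by linarith)
  set T := (1 + 4 / ε) * log n + (2 / ε) * log Δ
  have hT : 0 ≤ T := by positivity
  obtain ⟨i₀, -, hi₀⟩ : ∃ i ∈ univ, (f i : ℝ) ≤ log n := by
    refine exists_le_of_sum_le ⟨⟨0, hC1⟩, mem_univ _⟩ (hsum.trans_eq ?_)
    rw [sum_const, card_univ, Fintype.card_fin, nsmul_eq_mul, hC, div_mul_cancel₀ _ hL.ne']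
  have hexponent : -(ε * (T - log n)) / 2 = -(log (n ^ 2) + log Δ) := by
    simp only [T, log_pow, Nat.cast_ofNat]
    field_simp
    ring
  calc _ ≤ #(univ.filter fun i => T < (f i : ℝ)) * exp (-(ε * (T - f i₀)) / 2) :=
        sum_exp_filter_div_sum_exp_le _ hε.le T i₀
    _ ≤ Δ * exp (-(ε * (T - log n)) / 2) := by
        gcongr
        exact (card_filter_lt_le_sum f hT).trans hsum
    _ = 1 / n ^ 2 := by
        rw [hexponent, exp_neg, exp_add, exp_log (by positivity), exp_log (by linarith)]
        field_simp
end
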